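/- arXiv:1203.6008 — 2 statements merged into one kernel-verified Lean document; each statement's English description precedes it below -/
import Mathlib

section
/- Let m₁, …, m_c ≥ 2 be integers, let G = ⊕_{i=1}^{c} ℤ/(3mᵢ²), and let M = lcm(3m₁, …, 3m_c). Then there is no finite abelian group H with M·H = 0 such that H ⊕ H is isomorphic to G. -/
/-!
`H × H` has the exponent of `H`, which divides `M = lcm (3 mᵢ)`, while `G` has exponent
`lcm (3 mᵢ²)`; so an isomorphism would force `lcm (3 mᵢ²) ∣ M`. Pick a prime `p`
dividing some `mᵢ` and an index `i` for which `p ^ k ∥ mᵢ` with `k ≥ 1` maximal: then `p` occurs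
in `3 mᵢ²` with exponent `v_p(3) + 2k` but in `M` only with exponent `v_p(3) + k`.
-/

open Finset

namespace Nat

variable {ι : Type*} {s : Finset ι} {a : ℕ} {m : ι → ℕ}

lemma factorization_lcm_mul_le (ha : a ≠ 0) (hm : ∀ i ∈ s, m i ≠ 0) {p k : ℕ}
    (hk : ∀ i ∈ s, (m i).factorization p ≤ k) :
    (s.lcm fun i => a * m i).factorization p ≤ a.factorization p + k := by
  rw [Finset.factorization_lcm fun i hi => mul_ne_zero ha (hm i hi)]
  refine Finset.sup_le fun i hi => ?_
  rw [factorization_mul ha (hm i hi), Finsupp.add_apply]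
  exact Nat.add_le_add_left (hk i hi) _

theorem not_lcm_mul_sq_dvd_lcm_mul (ha : a ≠ 0) (hm : ∀ i ∈ s, m i ≠ 0)
    (hm_one : ∃ i ∈ s, m i ≠ 1) :
    ¬ (s.lcm fun i => a * m i ^ 2) ∣ s.lcm fun i => a * m i := by
  intro hdvd
  obtain ⟨i₀, hi₀, hi₀_one⟩ := hm_one
  obtain ⟨p, hp, hp_dvd⟩ := exists_prime_and_dvd hi₀_one
  obtain ⟨i, hi, hmax⟩ := s.exists_max_image (fun j => (m j).factorization p) ⟨i₀, hi₀⟩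
  set k := (m i).factorization p
  have hk : 0 < k :=
    (hp.factorization_pos_of_dvd (hm i₀ hi₀) hp_dvd).trans_le (hmax i₀ hi₀)
  have hmi : m i ≠ 0 := hm i hi
  have hterm : a * m i ^ 2 ∣ s.lcm fun j => a * m j :=
    (Finset.dvd_lcm (f := fun j => a * m j ^ 2) hi).trans hdvd
  have hlcm : (s.lcm fun j => a * m j) ≠ 0 :=
    Finset.lcm_ne_zero_iff.mpr fun j hj => mul_ne_zero ha (hm j hj)
  have hlower : a.factorization p + 2 * k ≤ (s.lcm fun j => a * m j).factorization p := by
    have := (factorization_le_iff_dvd (by positivity) hlcm).mpr hterm p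
    rwa [factorization_mul ha (pow_ne_zero 2 hmi), factorization_pow, Finsupp.add_apply,
      Finsupp.smul_apply, smul_eq_mul] at this
  have hupper := factorization_lcm_mul_le ha hm hmax
  omega

end Nat

namespace AddMonoid

lemma exponent_prod_self (H : Type*) [AddMonoid H] : exponent (H × H) = exponent H := by
  rw [exponent_prod, lcm_eq_nat_lcm, Nat.lcm_self]

lemma exponent_pi_zmod {ι : Type*} [Fintype ι] (n : ι → ℕ) :
    exponent ((i : ι) → ZMod (n i)) = univ.lcm n := by
  simp only [exponent_pi, ZMod.exponent]

end AddMonoid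

theorem stmt_3 (c : ℕ) (hc : 0 < c) (m : Fin c → ℕ) (hm : ∀ i, 2 ≤ m i) :
    ¬ ∃ (H : Type) (_ : AddCommGroup H) (_ : Finite H),
      (∀ h : H, (Finset.univ.lcm (fun i => 3 * m i)) • h = 0) ∧
      Nonempty ((H × H) ≃+ (∀ i : Fin c, ZMod (3 * (m i) ^ 2))) := by
  rintro ⟨H, _, _, hM, ⟨e⟩⟩
  have hdvd : (univ.lcm fun i => 3 * m i ^ 2) ∣ univ.lcm fun i => 3 * m i := by
    rw [← AddMonoid.exponent_pi_zmod, ← AddMonoid.exponent_eq_of_addEquiv e,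
      AddMonoid.exponent_prod_self]
    exact AddMonoid.exponent_dvd_of_forall_nsmul_eq_zero hM
  exact Nat.not_lcm_mul_sq_dvd_lcm_mul three_ne_zero (fun i _ => by grind)
    ⟨⟨0, hc⟩, mem_univ _, by grind⟩ hdvd
end

section
/- Let A be an n×n integer matrix with det A ≠ 0 and set Q = −A·Aᵀ. Then, viewing A and Q as linear maps ℤⁿ → ℤⁿ, the image of Q is contained in the image of A, the quotient group im(A)/im(Q) has order |det A|, and the cokernel ℤⁿ/im(Q) has order (det A)². -/
/-!
The cokernel of an integer matrix `B` with `det B ≠ 0` has order `|det B|` (Smith normal form).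
Since `Q = A * (-Aᵀ)`, the image of `Q` lies in the image of `A`, and the index is multiplicative
in the tower `im Q ≤ im A ≤ ℤⁿ`; hence `[im A : im Q] = (det A)² / |det A| = |det A|`.
-/

open Matrix

namespace LinearMap

variable {M : Type*} [AddCommGroup M] [Module.Free ℤ M] [Module.Finite ℤ M]

theorem natCard_quotient_range_eq_natAbs_det {f : M →ₗ[ℤ] M} (hf : f.det ≠ 0) :
    Nat.card (M ⧸ range f) = f.det.natAbs := by
  have hinj : Function.Injective f :=
    ker_eq_bot.mp (not_not.mp (mt det_eq_zero_iff_ker_ne_bot.mpr hf))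
  rw [← (range f).natAbs_det_equiv (LinearEquiv.ofInjective f hinj)]
  rfl

end LinearMap

theorem Submodule.card_quotient_comap_subtype_mul_card_quotient {R M : Type*} [Ring R]
    [AddCommGroup M] [Module R M] {P N : Submodule R M} (h : P ≤ N) :
    Nat.card (N ⧸ P.comap N.subtype) * Nat.card (M ⧸ N) = Nat.card (M ⧸ P) :=
  AddSubgroup.relIndex_mul_index (H := P.toAddSubgroup) (K := N.toAddSubgroup) h

namespace Matrix

theorem range_mulVecLin_neg {R m n : Type*} [CommRing R] [Fintype n] (B : Matrix m n R) :
    LinearMap.range (-B).mulVecLin = LinearMap.range B.mulVecLin := by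
  rw [mulVecLin, map_neg, LinearMap.range_neg]

variable {ι : Type*} [Fintype ι] [DecidableEq ι]

theorem natCard_quotient_range_mulVecLin {B : Matrix ι ι ℤ} (hB : B.det ≠ 0) :
    Nat.card ((ι → ℤ) ⧸ LinearMap.range B.mulVecLin) = B.det.natAbs := by
  rw [← toLin'_apply', LinearMap.natCard_quotient_range_eq_natAbs_det, LinearMap.det_toLin']
  rwa [LinearMap.det_toLin']

theorem natAbs_det_neg_mul_transpose (A : Matrix ι ι ℤ) :
    (-(A * Aᵀ)).det.natAbs = A.det.natAbs ^ 2 := by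
  rw [det_neg, det_mul, det_transpose, Int.natAbs_mul, Int.natAbs_pow, Int.natAbs_neg,
    Int.natAbs_one, one_pow, one_mul, Int.natAbs_mul, sq]

end Matrix

theorem stmt_8 (n : ℕ) (A : Matrix (Fin n) (Fin n) ℤ) (hA : A.det ≠ 0)
    (Q : Matrix (Fin n) (Fin n) ℤ) (hQ : Q = -(A * A.transpose)) :
    LinearMap.range Q.mulVecLin ≤ LinearMap.range A.mulVecLin ∧
    Nat.card ((LinearMap.range A.mulVecLin) ⧸
        ((LinearMap.range Q.mulVecLin).comap (LinearMap.range A.mulVecLin).subtype))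
      = A.det.natAbs ∧
    Nat.card ((Fin n → ℤ) ⧸ LinearMap.range Q.mulVecLin) = A.det.natAbs ^ 2 := by
  have hdetQ : Q.det.natAbs = A.det.natAbs ^ 2 := hQ ▸ natAbs_det_neg_mul_transpose A
  have hdA : A.det.natAbs ≠ 0 := Int.natAbs_ne_zero.mpr hA
  have hcokerA := natCard_quotient_range_mulVecLin hA
  have hcokerQ : Nat.card ((Fin n → ℤ) ⧸ LinearMap.range Q.mulVecLin) = A.det.natAbs ^ 2 := by
    rw [natCard_quotient_range_mulVecLin (Int.natAbs_ne_zero.mp (hdetQ ▸ pow_ne_zero 2 hdA)),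
      hdetQ]
  have hle : LinearMap.range Q.mulVecLin ≤ LinearMap.range A.mulVecLin := by
    rw [hQ, range_mulVecLin_neg, mulVecLin_mul]
    exact LinearMap.range_comp_le_range _ _
  refine ⟨hle, ?_, hcokerQ⟩
  have hmul := Submodule.card_quotient_comap_subtype_mul_card_quotient hle
  rw [hcokerA, hcokerQ, sq] at hmul
  exact Nat.eq_of_mul_eq_mul_right (Nat.pos_of_ne_zero hdA) hmul
end
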